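/- arXiv:2207.01834 — 6 statements merged into one kernel-verified Lean document; each statement's English description precedes it below -/
import Mathlib

section
/- For every nonempty finite set P ⊆ ℝ^d, there exists a support set S ⊆ P with |S| ≤ d + 1 such that the smallest enclosing ball of S equals the smallest enclosing ball of P (same center c* and same radius r*), and every point of S lies on the boundary sphere, i.e., dist(c*, s) = r* for all s ∈ S. -/
/-!
The center `c` lies in the convex hull of the farthest points `{p ∈ P | dist c p = r}`: otherwise
a direction `v` separating `c` from that hull brings `c + t • v` strictly closer to every
farthest point for small `t > 0`, while the other points stay within distance `r`, contradicting
minimality. Carathéodory keeps at most `d + 1` of these points with `c` still in their hull.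
Conversely, when `c` lies in the convex hull of a set, every other center `c'` is at least as far
from some point `y` of it (the angle at `c` between `c'` and `y` is obtuse), so `c` is also the
center of the smallest enclosing ball of the chosen points.
-/

open Finset Filter Topology

open scoped RealInnerProductSpace

section Caratheodory

variable {𝕜 E : Type*} [Field 𝕜] [LinearOrder 𝕜] [IsStrictOrderedRing 𝕜] [AddCommGroup E]
  [Module 𝕜 E] [FiniteDimensional 𝕜 E]

theorem exists_finset_card_le_finrank_succ_of_mem_convexHull {s : Set E} {x : E}
    (hx : x ∈ convexHull 𝕜 s) :
    ∃ t : Finset E, ↑t ⊆ s ∧ #t ≤ Module.finrank 𝕜 E + 1 ∧ x ∈ convexHull 𝕜 (t : Set E) := by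
  refine ⟨_, Caratheodory.minCardFinsetOfMemConvexHull_subseteq hx, ?_,
    Caratheodory.mem_minCardFinsetOfMemConvexHull hx⟩
  have hcard := (Caratheodory.affineIndependent_minCardFinsetOfMemConvexHull hx).card_le_finrank_succ
  rw [Fintype.card_coe] at hcard
  exact hcard.trans (Nat.succ_le_succ (Submodule.finrank_le _))

end Caratheodory

section InnerProductSpace

variable {E : Type*} [NormedAddCommGroup E] [InnerProductSpace ℝ E]

theorem exists_inner_sub_nonpos_of_mem_convexHull {s : Set E} {c : E}
    (hc : c ∈ convexHull ℝ s) (v : E) : ∃ y ∈ s, ⟪v, y - c⟫ ≤ 0 := by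
  by_contra! h
  have hsub : s ⊆ {x | ⟪v, c⟫ < ⟪v, x⟫} := fun y hy => by
    simpa [inner_sub_right] using h y hy
  exact lt_irrefl ⟪v, c⟫ (convexHull_min hsub (convex_halfSpace_gt (innerₗ E v).isLinear _) hc)

theorem exists_forall_inner_sub_pos_of_notMem_convexHull [CompleteSpace E] (s : Finset E)
    {c : E} (hc : c ∉ convexHull ℝ (s : Set E)) : ∃ v : E, ∀ y ∈ s, 0 < ⟪v, y - c⟫ := by
  obtain ⟨f, u, hfc, hfs⟩ := geometric_hahn_banach_point_closed (convex_convexHull ℝ _)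
    (s.finite_toSet.isClosed_convexHull ℝ) hc
  refine ⟨(InnerProductSpace.toDual ℝ E).symm f, fun y hy => ?_⟩
  have hfy := hfs y (subset_convexHull ℝ _ hy)
  rw [inner_sub_right, InnerProductSpace.toDual_symm_apply, InnerProductSpace.toDual_symm_apply]
  linarith

theorem dist_le_dist_of_inner_sub_nonpos {c c' s : E} (h : ⟪c' - c, s - c⟫ ≤ 0) :
    dist c s ≤ dist c' s := by
  have hsq : dist c' s ^ 2 = ‖c' - c‖ ^ 2 - 2 * ⟪c' - c, s - c⟫ + dist c s ^ 2 := by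
    rw [dist_eq_norm, dist_eq_norm, norm_sub_rev c, show c' - s = (c' - c) - (s - c) by abel,
      norm_sub_sq_real]
  exact pow_le_pow_iff_left₀ dist_nonneg dist_nonneg two_ne_zero |>.1 (by nlinarith)

theorem exists_dist_le_dist_of_mem_convexHull {s : Set E} {c : E} (hc : c ∈ convexHull ℝ s)
    (c' : E) : ∃ y ∈ s, dist c y ≤ dist c' y :=
  (exists_inner_sub_nonpos_of_mem_convexHull hc (c' - c)).imp
    fun _ ⟨hy, h⟩ => ⟨hy, dist_le_dist_of_inner_sub_nonpos h⟩

theorem eventually_dist_add_smul_lt_of_dist_lt {c p : E} {r : ℝ} (h : dist c p < r) (v : E) :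
    ∀ᶠ t : ℝ in 𝓝 0, dist (c + t • v) p < r := by
  have hcont : Continuous fun t : ℝ => dist (c + t • v) p := by fun_prop
  exact hcont.continuousAt.eventually_lt continuousAt_const (by simpa using h)

theorem eventually_dist_add_smul_lt_of_inner_sub_pos {c p v : E} (h : 0 < ⟪v, p - c⟫) :
    ∀ᶠ t : ℝ in 𝓝[>] 0, dist (c + t • v) p < dist c p := by
  have hsmall : ∀ᶠ t : ℝ in 𝓝 0, t * ‖v‖ ^ 2 < 2 * ⟪v, p - c⟫ := by
    have hcont : Continuous fun t : ℝ => t * ‖v‖ ^ 2 := by fun_prop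
    exact hcont.continuousAt.eventually_lt continuousAt_const (by simpa using h)
  filter_upwards [nhdsWithin_le_nhds hsmall, self_mem_nhdsWithin] with t hts (htpos : 0 < t)
  have hsq : dist (c + t • v) p ^ 2 = t * (t * ‖v‖ ^ 2 - 2 * ⟪v, p - c⟫) + dist c p ^ 2 := by
    rw [dist_eq_norm, dist_eq_norm, norm_sub_rev c, show c + t • v - p = t • v - (p - c) by abel,
      norm_sub_sq_real, norm_smul, real_inner_smul_left, Real.norm_eq_abs, mul_pow, sq_abs]
    ring
  exact pow_lt_pow_iff_left₀ dist_nonneg dist_nonneg two_ne_zero |>.1 (by nlinarith)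

theorem mem_convexHull_filter_dist_eq [CompleteSpace E] {P : Finset E} {c : E} {r : ℝ}
    (hle : ∀ p ∈ P, dist c p ≤ r) (hmin : ∀ c' : E, ∃ p ∈ P, r ≤ dist c' p) :
    c ∈ convexHull ℝ ({p ∈ P | dist c p = r} : Finset E) := by
  by_contra hc
  obtain ⟨v, hv⟩ := exists_forall_inner_sub_pos_of_notMem_convexHull _ hc
  have hall : ∀ᶠ t : ℝ in 𝓝[>] 0, ∀ p ∈ P, dist (c + t • v) p < r := by
    refine (eventually_all_finset P).2 fun p hp => ?_
    rcases (hle p hp).lt_or_eq with hlt | heq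
    · exact nhdsWithin_le_nhds (eventually_dist_add_smul_lt_of_dist_lt hlt v)
    · exact heq ▸ eventually_dist_add_smul_lt_of_inner_sub_pos (hv p (mem_filter.2 ⟨hp, heq⟩))
  obtain ⟨t, ht⟩ := hall.exists
  obtain ⟨p, hp, hrp⟩ := hmin (c + t • v)
  exact (ht p hp).not_ge hrp

end InnerProductSpace

theorem support_set_exists_general (d : ℕ)
    (P : Finset (EuclideanSpace ℝ (Fin d))) (hP : P.Nonempty)
    (c : EuclideanSpace ℝ (Fin d))
    (hc : ∀ c' : EuclideanSpace ℝ (Fin d),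
      P.sup' hP (fun p => dist c p) ≤ P.sup' hP (fun p => dist c' p)) :
    ∃ S : Finset (EuclideanSpace ℝ (Fin d)), S ⊆ P ∧ S.card ≤ d + 1 ∧
      ∃ hS : S.Nonempty,
        (∀ c' : EuclideanSpace ℝ (Fin d),
          S.sup' hS (fun p => dist c p) ≤ S.sup' hS (fun p => dist c' p)) ∧
        S.sup' hS (fun p => dist c p) = P.sup' hP (fun p => dist c p) ∧
        ∀ s ∈ S, dist c s = P.sup' hP (fun p => dist c p) := by
  set r := P.sup' hP (fun p => dist c p)
  have hmin (c' : EuclideanSpace ℝ (Fin d)) : ∃ p ∈ P, r ≤ dist c' p := by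
    obtain ⟨p, hp, hpc'⟩ := exists_mem_eq_sup' hP (fun p => dist c' p)
    exact ⟨p, hp, hpc' ▸ hc c'⟩
  obtain ⟨S, hSsub, hcard, hcS⟩ := exists_finset_card_le_finrank_succ_of_mem_convexHull
    (mem_convexHull_filter_dist_eq (fun p hp => le_sup' _ hp) hmin)
  rw [coe_subset, subset_iff] at hSsub
  have hSr (s : EuclideanSpace ℝ (Fin d)) (hs : s ∈ S) : dist c s = r :=
    (mem_filter.1 (hSsub hs)).2
  have hS : S.Nonempty := coe_nonempty.1 (convexHull_nonempty_iff.1 ⟨c, hcS⟩)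
  have hsupS : S.sup' hS (fun p => dist c p) = r := by
    rw [sup'_congr hS rfl hSr, sup'_const]
  refine ⟨S, fun s hs => (mem_filter.1 (hSsub hs)).1, ?_, hS, fun c' => ?_, hsupS, hSr⟩
  · simpa [finrank_euclideanSpace_fin] using hcard
  · obtain ⟨s, hs, hss⟩ := exists_dist_le_dist_of_mem_convexHull hcS c'
    rw [hsupS, ← hSr s hs]
    exact hss.trans (le_sup' (fun p => dist c' p) hs)

/-- For every nonempty finite `P ⊆ ℝ^d` with smallest enclosing ball
of center `c*` (a minimizer of the farthest-distance function) and radius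
`r* = f_P c*`, there exists a support set `S ⊆ P` with `|S| ≤ d + 1` such that the
smallest enclosing ball of `S` equals that of `P` (same center and radius), and
every point of `S` lies on the boundary sphere. -/
theorem support_set_exists (d : ℕ) (hd : 1 ≤ d)
    (P : Finset (EuclideanSpace ℝ (Fin d))) (hP : P.Nonempty)
    (c : EuclideanSpace ℝ (Fin d))
    (hc : ∀ c' : EuclideanSpace ℝ (Fin d),
      P.sup' hP (fun p => dist c p) ≤ P.sup' hP (fun p => dist c' p)) :
    ∃ S : Finset (EuclideanSpace ℝ (Fin d)), S ⊆ P ∧ S.card ≤ d + 1 ∧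
      ∃ hS : S.Nonempty,
        (∀ c' : EuclideanSpace ℝ (Fin d),
          S.sup' hS (fun p => dist c p) ≤ S.sup' hS (fun p => dist c' p)) ∧
        S.sup' hS (fun p => dist c p) = P.sup' hP (fun p => dist c p) ∧
        ∀ s ∈ S, dist c s = P.sup' hP (fun p => dist c p) :=
  support_set_exists_general d P hP c hc
end

section
/- For every nonempty finite set P ⊆ ℝ^d, the center c* of the smallest enclosing ball of P lies in the convex hull of P. -/
/-! If `c` lay outside the convex hull `K` of `P`, its nearest point `v` in `K` would be
strictly closer than `c` to every point of `K`, by the obtuse-angle characterisation of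
the projection onto a closed convex set; in particular `v` would beat `c` as a center. -/

open scoped RealInnerProductSpace

variable {E : Type*} [NormedAddCommGroup E] [InnerProductSpace ℝ E]

theorem dist_lt_dist_of_inner_sub_nonpos {c v p : E} (hcv : c ≠ v)
    (h : ⟪c - v, p - v⟫ ≤ 0) : dist v p < dist c p := by
  have hsq : dist c p ^ 2 = ‖c - v‖ ^ 2 - 2 * ⟪c - v, p - v⟫ + dist v p ^ 2 := by
    rw [dist_eq_norm, dist_eq_norm, norm_sub_rev v, ← norm_sub_sq_real, sub_sub_sub_cancel_right]
  have hpos : 0 < ‖c - v‖ ^ 2 := by positivity [sub_ne_zero.2 hcv]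
  exact lt_of_pow_lt_pow_left₀ 2 dist_nonneg (by nlinarith)

theorem exists_forall_dist_lt_of_notMem {K : Set E} (hne : K.Nonempty) (hK : IsComplete K)
    (hconv : Convex ℝ K) {c : E} (hc : c ∉ K) : ∃ v ∈ K, ∀ p ∈ K, dist v p < dist c p := by
  obtain ⟨v, hvK, hv⟩ := exists_norm_eq_iInf_of_complete_convex hne hK hconv c
  exact ⟨v, hvK, fun p hp => dist_lt_dist_of_inner_sub_nonpos (fun h => hc (h ▸ hvK))
    ((norm_eq_iInf_iff_real_inner_le_zero hconv hvK).mp hv p hp)⟩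

theorem seb_center_mem_convexHull_general (d : ℕ)
    (P : Finset (EuclideanSpace ℝ (Fin d))) (hP : P.Nonempty)
    (c : EuclideanSpace ℝ (Fin d))
    (hc : ∀ c' : EuclideanSpace ℝ (Fin d),
      P.sup' hP (fun p => dist c p) ≤ P.sup' hP (fun p => dist c' p)) :
    c ∈ convexHull ℝ (P : Set (EuclideanSpace ℝ (Fin d))) := by
  by_contra hcK
  obtain ⟨v, -, hv⟩ := exists_forall_dist_lt_of_notMem (convexHull_nonempty_iff.2 hP.to_set)
    (P.finite_toSet.isCompact_convexHull ℝ).isComplete (convex_convexHull ℝ _) hcK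
  refine (hc v).not_gt ((Finset.sup'_lt_iff hP).2 fun p hp => ?_)
  exact (hv p (subset_convexHull ℝ _ hp)).trans_le (Finset.le_sup' _ hp)

/-- For every nonempty finite set `P ⊆ ℝ^d`, the center `c*` of the
smallest enclosing ball of `P` (i.e., any minimizer of the farthest-distance
function) lies in the convex hull of `P`. -/
theorem seb_center_mem_convexHull (d : ℕ) (hd : 1 ≤ d)
    (P : Finset (EuclideanSpace ℝ (Fin d))) (hP : P.Nonempty)
    (c : EuclideanSpace ℝ (Fin d))
    (hc : ∀ c' : EuclideanSpace ℝ (Fin d),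
      P.sup' hP (fun p => dist c p) ≤ P.sup' hP (fun p => dist c' p)) :
    c ∈ convexHull ℝ (P : Set (EuclideanSpace ℝ (Fin d))) :=
  seb_center_mem_convexHull_general d P hP c hc
end

section
/- Let S ⊆ ℝ^d be a nonempty finite set with smallest enclosing ball of center c_S and radius r_S, and let q ∈ ℝ^d be a point outside this ball, i.e., dist(c_S, q) > r_S. Then q lies on the boundary sphere of the smallest enclosing ball of S ∪ {q}: if c' and r' denote the center and radius of the smallest enclosing ball of S ∪ {q}, then dist(c', q) = r'. -/
open scoped Classical

/-- If `q` lies strictly outside the smallest enclosing ball of a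
nonempty finite set `S` (with center `cS` and radius `r_S = f_S cS`), then `q`
lies on the boundary sphere of the smallest enclosing ball of `S ∪ {q}`: if `c'`
is the center (minimizer of the farthest-distance function of `S ∪ {q}`) and the
radius is `r' = f_{S ∪ {q}} c'`, then `dist c' q = r'`. -/
theorem welzl_boundary_invariant (d : ℕ) (hd : 1 ≤ d)
    (S : Finset (EuclideanSpace ℝ (Fin d))) (hS : S.Nonempty)
    (cS : EuclideanSpace ℝ (Fin d))
    (hcS : ∀ c' : EuclideanSpace ℝ (Fin d),
      S.sup' hS (fun p => dist cS p) ≤ S.sup' hS (fun p => dist c' p))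
    (q : EuclideanSpace ℝ (Fin d))
    (hq : S.sup' hS (fun p => dist cS p) < dist cS q)
    (c' : EuclideanSpace ℝ (Fin d))
    (hc' : ∀ c : EuclideanSpace ℝ (Fin d),
      (insert q S).sup' (Finset.insert_nonempty q S) (fun p => dist c' p)
        ≤ (insert q S).sup' (Finset.insert_nonempty q S) (fun p => dist c p)) :
    dist c' q = (insert q S).sup' (Finset.insert_nonempty q S) (fun p => dist c' p) := by
  set b := S.sup' hS (fun p => dist cS p) with hb_def
  set a := S.sup' hS (fun p => dist c' p) with ha_def
  set r' := (insert q S).sup' (Finset.insert_nonempty q S) (fun p => dist c' p) with hr'_def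
  -- r' = max (dist c' q) a
  have hmax : ∀ c : EuclideanSpace ℝ (Fin d), (insert q S).sup' (Finset.insert_nonempty q S) (fun p => dist c p)
      = max (dist c q) (S.sup' hS (fun p => dist c p)) := by
    intro c
    rw [Finset.sup'_insert]
  by_contra hne
  have hle : dist c' q ≤ r' := Finset.le_sup' _ (Finset.mem_insert_self q S)
  have hlt : dist c' q < r' := lt_of_le_of_ne hle hne
  have hr'a : r' = a := by
    have := hmax c'
    rw [← hr'_def, ← ha_def] at this
    rcases max_choice (dist c' q) a with h | h
    · rw [this, h] at hlt; exact absurd hlt (lt_irrefl _)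
    · rw [this, h]
  have hba : b ≤ a := hcS c'
  have ha_nonneg : (0:ℝ) ≤ a := by
    obtain ⟨p, hp⟩ := hS
    exact le_trans dist_nonneg (Finset.le_sup' _ hp)
  rcases lt_or_eq_of_le hba with hba' | hba'
  · -- move from c' toward cS by small t
    set u := dist c' q with hu_def
    set M := dist cS q with hM_def
    have hu_lt : u < a := by rw [← hr'a]; exact hlt
    set t : ℝ := min (1/2) ((a - u) / (2 * (M + 1))) with ht_def
    have hM1 : (0:ℝ) < M + 1 := by positivity
    have ht_pos : 0 < t := by
      apply lt_min (by norm_num)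
      apply div_pos (by linarith) (by linarith)
    have ht_le : t ≤ 1/2 := min_le_left _ _
    have ht1 : (0:ℝ) ≤ 1 - t := by linarith
    have hsum : (1 - t) + t = 1 := by ring
    set ct : EuclideanSpace ℝ (Fin d) := (1 - t) • c' + t • cS with hct_def
    have hconv : ∀ z : EuclideanSpace ℝ (Fin d), dist ct z ≤ (1 - t) * dist c' z + t * dist cS z := by
      intro z
      exact (convexOn_dist z convex_univ).2 (Set.mem_univ c') (Set.mem_univ cS)
        ht1 ht_pos.le hsum
    have hcontr : (insert q S).sup' (Finset.insert_nonempty q S) (fun p => dist ct p) < a := by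
      rw [hmax ct]
      apply max_lt
      · -- dist ct q < a
        have h1 := hconv q
        have h2 : t * (M - u) ≤ t * (M + 1) := by
          apply mul_le_mul_of_nonneg_left _ ht_pos.le
          have : (0:ℝ) ≤ u := dist_nonneg
          linarith
        have h3 : t * (M + 1) ≤ (a - u) / 2 := by
          have := min_le_right (1/2 : ℝ) ((a - u) / (2 * (M + 1)))
          rw [← ht_def] at this
          calc t * (M + 1) ≤ ((a - u) / (2 * (M + 1))) * (M + 1) := by
                exact mul_le_mul_of_nonneg_right this hM1.le
            _ = (a - u) / 2 := by field_simp
        have : (1 - t) * u + t * M = u + t * (M - u) := by ring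
        calc dist ct q ≤ (1 - t) * u + t * M := h1
          _ = u + t * (M - u) := by ring
          _ ≤ u + (a - u) / 2 := by linarith
          _ < a := by linarith
      · -- sup over S < a
        rw [Finset.sup'_lt_iff]
        intro p hp
        have h1 := hconv p
        have h2 : dist c' p ≤ a := Finset.le_sup' _ hp
        have h3 : dist cS p ≤ b := Finset.le_sup' _ hp
        calc dist ct p ≤ (1 - t) * dist c' p + t * dist cS p := h1
          _ ≤ (1 - t) * a + t * b := by
              apply add_le_add
              · exact mul_le_mul_of_nonneg_left h2 ht1
              · exact mul_le_mul_of_nonneg_left h3 ht_pos.le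
          _ < (1 - t) * a + t * a := by
              have := mul_lt_mul_of_pos_left hba' ht_pos
              linarith
          _ = a := by ring
    have := hc' ct
    rw [hr'a] at this
    exact absurd (lt_of_le_of_lt this hcontr) (lt_irrefl _)
  · -- b = a
    by_cases hcc : c' = cS
    · -- then dist c' q = dist cS q > b = a = r' ≥ dist c' q
      rw [hcc] at hlt
      rw [hr'a, ← hba'] at hlt
      exact absurd (lt_trans hq hlt) (lt_irrefl _)
    · -- midpoint strictly better than cS for S, contradiction with hcS
      set m : EuclideanSpace ℝ (Fin d) := midpoint ℝ c' cS with hm_def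
      have hd0 : 0 < dist c' cS := dist_pos.mpr hcc
      have hb_nonneg : (0:ℝ) ≤ b := hba' ▸ ha_nonneg
      have hsup : S.sup' hS (fun p => dist m p) < b := by
        rw [Finset.sup'_lt_iff]
        intro p hp
        have hap : Dist.dist p c' ^ 2 + dist p cS ^ 2
            = 2 * (dist p (midpoint ℝ c' cS) ^ 2 + (dist c' cS / 2) ^ 2) :=
          EuclideanGeometry.dist_sq_add_dist_sq_eq_two_mul_dist_midpoint_sq_add_half_dist_sq p c' cS
        have h1 : dist p c' ≤ a := by rw [dist_comm]; exact Finset.le_sup' _ hp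
        have h2 : dist p cS ≤ b := by rw [dist_comm]; exact Finset.le_sup' _ hp
        have h1' : dist p c' ^ 2 ≤ a ^ 2 := by
          apply pow_le_pow_left₀ dist_nonneg h1
        have h2' : dist p cS ^ 2 ≤ b ^ 2 := by
          apply pow_le_pow_left₀ dist_nonneg h2
        have hdsq : (0:ℝ) < (dist c' cS / 2) ^ 2 := by positivity
        have hmp : dist p m ^ 2 < b ^ 2 := by
          have hm_eq : dist p m ^ 2
              = (dist p c' ^ 2 + dist p cS ^ 2) / 2 - (dist c' cS / 2) ^ 2 := by
            rw [hm_def]; linarith [hap]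
          rw [hm_eq]
          have h1'' : dist p c' ^ 2 ≤ b ^ 2 := by rw [hba']; exact h1'
          linarith
        have : dist p m < b := by
          apply lt_of_pow_lt_pow_left₀ 2 hb_nonneg
          exact hmp
        rw [dist_comm] at this
        exact this
      exact absurd (lt_of_le_of_lt (hcS m) hsup) (lt_irrefl _)
end

section
/- Let S ⊆ ℝ^d be a nonempty finite set with smallest enclosing ball of center c_S and radius r_S, and let q ∈ ℝ^d satisfy dist(c_S, q) > r_S. Then the radius of the smallest enclosing ball of S ∪ {q} is strictly larger than r_S. -/
open scoped Classical

/-- If `q` lies strictly outside the smallest enclosing ball of a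
nonempty finite set `S` (with center `cS` and radius `r_S = f_S cS`), then the
radius of the smallest enclosing ball of `S ∪ {q}` is strictly larger than
`r_S`. -/
theorem seb_radius_strict_increase (d : ℕ) (hd : 1 ≤ d)
    (S : Finset (EuclideanSpace ℝ (Fin d))) (hS : S.Nonempty)
    (cS : EuclideanSpace ℝ (Fin d))
    (hcS : ∀ c' : EuclideanSpace ℝ (Fin d),
      S.sup' hS (fun p => dist cS p) ≤ S.sup' hS (fun p => dist c' p))
    (q : EuclideanSpace ℝ (Fin d))
    (hq : S.sup' hS (fun p => dist cS p) < dist cS q)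
    (c' : EuclideanSpace ℝ (Fin d))
    (hc' : ∀ c : EuclideanSpace ℝ (Fin d),
      (insert q S).sup' (Finset.insert_nonempty q S) (fun p => dist c' p)
        ≤ (insert q S).sup' (Finset.insert_nonempty q S) (fun p => dist c p)) :
    S.sup' hS (fun p => dist cS p)
      < (insert q S).sup' (Finset.insert_nonempty q S) (fun p => dist c' p) := by
  set r : ℝ := S.sup' hS (fun p => dist cS p) with hr
  by_contra h
  push_neg at h
  -- dist c' q ≤ r
  have hq' : dist c' q ≤ r :=
    le_trans (Finset.le_sup' (fun p => dist c' p) (Finset.mem_insert_self q S)) h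
  have hSr : ∀ p ∈ S, dist c' p ≤ r := fun p hp =>
    le_trans (Finset.le_sup' (fun p => dist c' p)
      (Finset.mem_insert_of_mem hp)) h
  have hne : c' ≠ cS := by
    rintro rfl
    exact absurd hq (not_lt.mpr hq')
  -- the midpoint beats cS on S, contradiction
  set m : EuclideanSpace ℝ (Fin d) := midpoint ℝ cS c' with hm
  have hmid : ∀ p ∈ S, dist m p < r := by
    intro p hp
    have hcSp : cS ∈ Metric.closedBall p r := by
      rw [Metric.mem_closedBall]
      exact Finset.le_sup' (fun p => dist cS p) hp
    have hc'p : c' ∈ Metric.closedBall p r := by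
      rw [Metric.mem_closedBall]
      exact hSr p hp
    have : m ∈ Metric.ball p r := by
      have hcomb := combo_mem_ball_of_ne hcSp hc'p (Ne.symm hne)
        (by norm_num : (0:ℝ) < 1/2) (by norm_num : (0:ℝ) < 1/2) (by norm_num)
      have : (1/2 : ℝ) • cS + (1/2 : ℝ) • c' = m := by
        rw [hm, midpoint_eq_smul_add, invOf_eq_inv]; module
      rwa [this] at hcomb
    simpa [Metric.mem_ball, dist_comm] using this
  obtain ⟨p₀, hp₀, hp₀eq⟩ := Finset.exists_mem_eq_sup' hS (fun p => dist m p)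
  have : r ≤ S.sup' hS (fun p => dist m p) := hcS m
  rw [hp₀eq] at this
  exact absurd (hmid p₀ hp₀) (not_lt.mpr this)
end

section
/- For every nonempty finite set P ⊆ ℝ^d with smallest enclosing ball of center c* and radius r*, the smallest enclosing ball of the boundary points B = {p ∈ P : dist(c*, p) = r*} equals the smallest enclosing ball of P; in particular B is nonempty and the minimizing center and minimal radius of the farthest-distance function of B coincide with c* and r*. -/
/-- For every nonempty finite `P ⊆ ℝ^d` with smallest enclosing
ball of center `c*` and radius `r* = f_P c*`, the smallest enclosing ball of the
boundary points `B = {p ∈ P : dist c* p = r*}` equals the smallest enclosing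
ball of `P`: `B` is nonempty, `c*` minimizes the farthest-distance function of
`B`, and the minimal radius over `B` equals `r*`. -/
theorem seb_of_boundary_points (d : ℕ) (hd : 1 ≤ d)
    (P : Finset (EuclideanSpace ℝ (Fin d))) (hP : P.Nonempty)
    (c : EuclideanSpace ℝ (Fin d))
    (hc : ∀ c' : EuclideanSpace ℝ (Fin d),
      P.sup' hP (fun p => dist c p) ≤ P.sup' hP (fun p => dist c' p))
    (B : Finset (EuclideanSpace ℝ (Fin d)))
    (hBdef : B = P.filter (fun p => dist c p = P.sup' hP (fun p => dist c p))) :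
    ∃ hB : B.Nonempty,
      (∀ c' : EuclideanSpace ℝ (Fin d),
        B.sup' hB (fun p => dist c p) ≤ B.sup' hB (fun p => dist c' p)) ∧
      B.sup' hB (fun p => dist c p) = P.sup' hP (fun p => dist c p) := by
  classical
  set r := P.sup' hP (fun p => dist c p) with hr
  obtain ⟨p0, hp0P, hp0⟩ := P.exists_mem_eq_sup' hP (fun p => dist c p)
  have hp0B : p0 ∈ B := by
    rw [hBdef, Finset.mem_filter]; exact ⟨hp0P, hp0.symm⟩
  have hB : B.Nonempty := ⟨p0, hp0B⟩
  have hBP : ∀ p ∈ B, p ∈ P ∧ dist c p = r := by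
    intro p hp; rw [hBdef, Finset.mem_filter] at hp; exact hp
  have hBsup : B.sup' hB (fun p => dist c p) = r := by
    apply le_antisymm
    · exact Finset.sup'_le _ _ fun p hp => (hBP p hp).2.le
    · calc r = dist c p0 := hp0
        _ ≤ _ := Finset.le_sup' _ hp0B
  refine ⟨hB, ?_, hBsup⟩
  intro c'
  by_contra hcon
  push_neg at hcon
  rw [hBsup] at hcon
  by_cases hPB : ∀ p ∈ P, p ∈ B
  · have h1 : B.sup' hB (fun p => dist c' p) = P.sup' hP (fun p => dist c' p) := by
      apply le_antisymm
      · exact Finset.sup'_le _ _ fun p hp => Finset.le_sup' _ ((hBP p hp).1)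
      · exact Finset.sup'_le _ _ fun p hp => Finset.le_sup' _ (hPB p hp)
    rw [h1] at hcon
    exact absurd (hc c') (not_le.mpr hcon)
  · push_neg at hPB
    obtain ⟨q, hqP, hqB⟩ := hPB
    have hS : (P \ B).Nonempty := ⟨q, Finset.mem_sdiff.mpr ⟨hqP, hqB⟩⟩
    set ε := (P \ B).inf' hS (fun p => r - dist c p) with hε
    have hεpos : 0 < ε := by
      rw [hε, Finset.lt_inf'_iff]
      intro p hp
      rw [Finset.mem_sdiff] at hp
      have hlt : dist c p < r := lt_of_le_of_ne (Finset.le_sup' _ hp.1) (by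
        intro h; exact hp.2 (by rw [hBdef, Finset.mem_filter]; exact ⟨hp.1, h⟩))
      linarith
    have hne : c ≠ c' := by
      intro h
      rw [← h, hBsup] at hcon
      exact lt_irrefl r hcon
    have hDpos : 0 < dist c c' := dist_pos.mpr hne
    set D := dist c c' with hD
    set t := min (1/2 : ℝ) (ε / (2 * D)) with ht
    have htpos : 0 < t := lt_min (by norm_num) (div_pos hεpos (by positivity))
    have ht1 : t ≤ 1 := le_trans (min_le_left _ _) (by norm_num)
    have htD : t * D < ε := by
      have h2 : t ≤ ε / (2 * D) := min_le_right _ _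
      have h3 : t * D ≤ ε / (2 * D) * D := by nlinarith
      have h4 : ε / (2 * D) * D = ε / 2 := by field_simp
      linarith
    set cT : EuclideanSpace ℝ (Fin d) := (1 - t) • c + t • c' with hcT
    have key : ∀ p ∈ P, dist cT p < r := by
      intro p hpP
      by_cases hpB : p ∈ B
      · have hdp : dist c p = r := (hBP p hpB).2
        have hd' : dist c' p ≤ B.sup' hB (fun z => dist c' z) := Finset.le_sup' _ hpB
        have hbound : dist cT p ≤ (1 - t) * dist c p + t * dist c' p := by
          have := (convexOn_univ_dist p).2 (Set.mem_univ c) (Set.mem_univ c')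
            (by linarith : (0:ℝ) ≤ 1 - t) htpos.le (by ring)
          simpa [hcT, dist_comm] using this
        have : dist cT p ≤ (1 - t) * r + t * (B.sup' hB (fun z => dist c' z)) := by
          have h5 : t * dist c' p ≤ t * (B.sup' hB (fun z => dist c' z)) := by
            exact mul_le_mul_of_nonneg_left hd' htpos.le
          rw [hdp] at hbound
          linarith
        nlinarith [hcon]
      · have hpS : p ∈ P \ B := Finset.mem_sdiff.mpr ⟨hpP, hpB⟩
        have hεle : ε ≤ r - dist c p := Finset.inf'_le _ hpS
        have hdc : dist cT c = t * D := by
          have h6 : cT - c = t • (c' - c) := by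
            rw [hcT]
            module
          rw [dist_eq_norm, h6, norm_smul, Real.norm_eq_abs, abs_of_pos htpos,
            ← dist_eq_norm, dist_comm, hD]
        calc dist cT p ≤ dist cT c + dist c p := dist_triangle _ _ _
          _ = t * D + dist c p := by rw [hdc]
          _ < r := by linarith
    have hsup : P.sup' hP (fun p => dist cT p) < r := (Finset.sup'_lt_iff hP).mpr key
    exact absurd (hc cT) (not_le.mpr hsup)
end

section
/- Let P₁ and P₂ be finite subsets of a metric space, let q be a query point, and let k be a natural number. Suppose S₁ is a k-nearest-neighbor set of q in P₁ and S₂ is a k-nearest-neighbor set of q in P₂. Then there exists a k-nearest-neighbor set S of q in P₁ ∪ P₂ with S ⊆ S₁ ∪ S₂. Hence running a k-NN query on each static tree of a multi-tree structure while accumulating candidates into a shared buffer of the k closest points found so far yields a correct k-nearest-neighbor set for the full point set. -/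
/-- `S` is a `k`-nearest-neighbor set of `q` in the finite set `P`: `S ⊆ P`,
`|S| = min k |P|`, and every point of `S` is at least as close to `q` as every
point of `P \ S`. -/
def IsKNearestNeighborSet {α : Type*} [MetricSpace α] (k : ℕ) (q : α)
    (P S : Finset α) : Prop :=
  S ⊆ P ∧ S.card = min k P.card ∧
    ∀ s ∈ S, ∀ p ∈ P, p ∉ S → dist q s ≤ dist q p


private lemma exists_prefix {α : Type*} [DecidableEq α] (f : α → ℝ) (T : Finset α) :
    ∀ n, n ≤ T.card → ∃ S ⊆ T, S.card = n ∧ ∀ s ∈ S, ∀ t ∈ T, t ∉ S → f s ≤ f t := by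
  intro n
  induction n with
  | zero => intro _; exact ⟨∅, by simp⟩
  | succ n ih =>
    intro hn
    obtain ⟨S, hST, hcard, hmin⟩ := ih (Nat.le_of_succ_le hn)
    have hne : (T \ S).Nonempty := by
      rw [← Finset.card_pos, Finset.card_sdiff_of_subset hST]
      omega
    obtain ⟨t₀, ht₀, ht₀min⟩ := Finset.exists_min_image (T \ S) f hne
    have ht₀T := (Finset.mem_sdiff.mp ht₀).1
    have ht₀S := (Finset.mem_sdiff.mp ht₀).2
    refine ⟨insert t₀ S, ?_, ?_, ?_⟩
    · exact Finset.insert_subset ht₀T hST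
    · rw [Finset.card_insert_of_notMem ht₀S, hcard]
    · intro s hs t ht hts
      have htS : t ∉ S := fun h => hts (Finset.mem_insert_of_mem h)
      rcases Finset.mem_insert.mp hs with rfl | hs
      · exact ht₀min t (Finset.mem_sdiff.mpr ⟨ht, htS⟩)
      · exact hmin s hs t ht htS


/-- If `S₁` is a `k`-nearest-neighbor set of `q` in `P₁` and `S₂`
is a `k`-nearest-neighbor set of `q` in `P₂`, then there is a
`k`-nearest-neighbor set `S` of `q` in `P₁ ∪ P₂` with `S ⊆ S₁ ∪ S₂`. -/
theorem knn_merge {α : Type*} [MetricSpace α] [DecidableEq α]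
    (k : ℕ) (q : α) (P₁ P₂ S₁ S₂ : Finset α)
    (h₁ : IsKNearestNeighborSet k q P₁ S₁)
    (h₂ : IsKNearestNeighborSet k q P₂ S₂) :
    ∃ S : Finset α, IsKNearestNeighborSet k q (P₁ ∪ P₂) S ∧ S ⊆ S₁ ∪ S₂ := by
  obtain ⟨hS₁P, hS₁c, hS₁m⟩ := h₁
  obtain ⟨hS₂P, hS₂c, hS₂m⟩ := h₂
  set m := min k (P₁ ∪ P₂).card with hm
  have hmle : m ≤ (S₁ ∪ S₂).card := by
    rcases le_or_gt k P₁.card with h | h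
    · have : S₁.card = k := by omega
      calc m ≤ k := min_le_left _ _
        _ = S₁.card := this.symm
        _ ≤ (S₁ ∪ S₂).card := Finset.card_le_card (Finset.subset_union_left)
    · rcases le_or_gt k P₂.card with h' | h'
      · have : S₂.card = k := by omega
        calc m ≤ k := min_le_left _ _
          _ = S₂.card := this.symm
          _ ≤ (S₁ ∪ S₂).card := Finset.card_le_card (Finset.subset_union_right)
      · have e1 : S₁ = P₁ := Finset.eq_of_subset_of_card_le hS₁P (by omega)
        have e2 : S₂ = P₂ := Finset.eq_of_subset_of_card_le hS₂P (by omega)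
        calc m ≤ (P₁ ∪ P₂).card := min_le_right _ _
          _ = (S₁ ∪ S₂).card := by rw [e1, e2]
  obtain ⟨S, hSsub, hScard, hSmin⟩ := exists_prefix (dist q) (S₁ ∪ S₂) m hmle
  have hSP : S ⊆ P₁ ∪ P₂ :=
    hSsub.trans (Finset.union_subset_union hS₁P hS₂P)
  refine ⟨S, ⟨hSP, hScard, ?_⟩, hSsub⟩
  intro s hs p hp hpS
  by_cases hpU : p ∈ S₁ ∪ S₂
  · exact hSmin s hs p hpU hpS
  · by_contra hlt
    push_neg at hlt
    -- s ∈ S, dist q p < dist q s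
    -- WLOG p ∈ P₁ \ S₁ (symmetric); handle both
    have key : ∀ (Pa Sa : Finset α), Sa ⊆ Pa → Sa.card = min k Pa.card →
        (∀ s ∈ Sa, ∀ p ∈ Pa, p ∉ Sa → dist q s ≤ dist q p) →
        Sa ⊆ S₁ ∪ S₂ → p ∈ Pa → p ∉ Sa → False := by
      intro Pa Sa hsub hc hmin hSaU hpPa hpSa
      -- every element of Sa has dist ≤ dist q p < dist q s, so s ∉ Sa
      have hsSa : s ∉ Sa := fun h => absurd (hmin s h p hpPa hpSa) (not_le.mpr hlt)
      -- all of Sa ⊆ S: if t ∈ Sa \ S then dist q s ≤ dist q t ≤ dist q p, contra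
      have hSaS : Sa ⊆ S := by
        intro t ht
        by_contra htS
        have h1 : dist q s ≤ dist q t := hSmin s hs t (hSaU ht) htS
        have h2 : dist q t ≤ dist q p := hmin t ht p hpPa hpSa
        linarith
      have hcard : Sa.card < S.card := by
        apply Finset.card_lt_card
        exact Finset.ssubset_iff_of_subset hSaS |>.mpr ⟨s, hs, hsSa⟩
      -- |S| ≤ k, so |Sa| < k, so Sa = Pa, contradicting p ∈ Pa \ Sa
      have hSk : S.card ≤ k := by rw [hScard]; exact min_le_left _ _
      have : Sa.card = Pa.card := by omega
      have : Sa = Pa := Finset.eq_of_subset_of_card_le hsub (by omega)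
      exact hpSa (this ▸ hpPa)
    rcases Finset.mem_union.mp hp with hp1 | hp2
    · exact key P₁ S₁ hS₁P hS₁c hS₁m Finset.subset_union_left hp1
        (fun h => hpU (Finset.mem_union_left _ h))
    · exact key P₂ S₂ hS₂P hS₂c hS₂m Finset.subset_union_right hp2
        (fun h => hpU (Finset.mem_union_right _ h))
end
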